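/- arXiv:1204.6522 — 4 statements merged into one kernel-verified Lean document; each statement's English description precedes it below -/
import Mathlib

section
/- Over a ℚ-algebra A, for a sequence (x₁,x₂,…) ∈ A^{ℕ⁺} with associated necklace vector α = g̃⁻¹(x) (i.e. Σ_{d|n} d·α_d = x_n for all n), one has ∏_{n≥1}(1 − zⁿ)^{−αₙ} = exp(Σ_{n≥1} (xₙ/n) zⁿ) as formal power series. -/
variable {A : Type*} [CommRing A] [Algebra ℚ A]

/-- Composition `f ∘ g` of formal power series (`g` with zero constant term),
defined coefficientwise. -/
noncomputable def comp (f g : PowerSeries A) : PowerSeries A :=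
  PowerSeries.mk fun n => ∑ k ∈ Finset.range (n + 1),
    PowerSeries.coeff k f * PowerSeries.coeff n (g ^ k)

/-- The series `log(1-z) = -Σ_{m≥1} zᵐ/m`. -/
noncomputable def logOneSub : PowerSeries A :=
  PowerSeries.mk fun m => if m = 0 then 0 else algebraMap ℚ A (-(1 / m))

/-- The factor `(1 - zⁿ)^{-αₙ} := exp(-αₙ · log(1 - zⁿ))`. -/
noncomputable def necklFactor (c : A) (n : ℕ) : PowerSeries A :=
  comp (PowerSeries.exp A) ((-c) • comp logOneSub (PowerSeries.X ^ n))

/-- The infinite product `∏_{n≥1} (1 - zⁿ)^{-αₙ}`, defined coefficientwise (the `N`-th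
coefficient only involves the factors with index `≤ N`). -/
noncomputable def necklProd (α : ℕ → A) : PowerSeries A :=
  PowerSeries.mk fun N =>
    PowerSeries.coeff N (∏ k ∈ Finset.range N, necklFactor (α (k + 1)) (k + 1))

/-!
To compare `N`-th coefficients, work modulo `X ^ (N + 1)`. There every series with zero constant
term is nilpotent, and `comp (exp A) g` becomes the nilpotent exponential `IsNilpotent.exp g`,
which turns finite sums into products. Hence the truncated product of the factors
`exp (-αₙ log (1 - Xⁿ))` is the exponential of `Σₙ αₙ Σ_{m ≥ 1} X^{nm} / m`, whose `i`-th
coefficient is `(1 / i) Σ_{d ∣ i} d α_d = xᵢ / i`.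
-/

open PowerSeries Finset

section Comp

variable {R : Type*} [CommRing R]

theorem coeff_comp (f g : R⟦X⟧) (n : ℕ) :
    coeff n (comp f g) = ∑ k ∈ range (n + 1), coeff k f * coeff n (g ^ k) :=
  coeff_mk _ _

theorem constantCoeff_comp (f g : R⟦X⟧) : constantCoeff (comp f g) = constantCoeff f := by
  rw [← coeff_zero_eq_constantCoeff_apply, ← coeff_zero_eq_constantCoeff_apply, coeff_comp]
  simp

theorem coeff_comp_eq_sum_range {f g : R⟦X⟧} (hg : constantCoeff g = 0) {n M : ℕ}
    (hn : n < M) : coeff n (comp f g) = ∑ k ∈ range M, coeff k f * coeff n (g ^ k) := by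
  rw [coeff_comp]
  refine sum_subset (range_subset_range.2 hn) fun k _ hk => ?_
  have hX : X ^ k ∣ g ^ k := pow_dvd_pow_of_dvd (X_dvd_iff.2 hg) k
  rw [X_pow_dvd_iff.1 hX n (by simpa using hk), mul_zero]

theorem coeff_comp_X_pow (f : R⟦X⟧) {n : ℕ} (hn : n ≠ 0) (m : ℕ) :
    coeff m (comp f (X ^ n)) = if n ∣ m then coeff (m / n) f else 0 := by
  simp_rw [coeff_comp, ← pow_mul, coeff_X_pow, mul_ite, mul_one, mul_zero]
  split_ifs with hdvd
  · obtain ⟨q, rfl⟩ := hdvd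
    have hn0 : 0 < n := Nat.pos_of_ne_zero hn
    simp_rw [Nat.mul_div_cancel_left q hn0, Nat.mul_left_cancel_iff hn0]
    rw [sum_ite_eq, if_pos (mem_range.2 (Nat.lt_succ_of_le (Nat.le_mul_of_pos_left q hn0)))]
  · exact sum_eq_zero fun k _ => if_neg fun h => hdvd ⟨k, h⟩

theorem mk_span_X_pow_eq_mk_iff {M : ℕ} {f g : R⟦X⟧} :
    Ideal.Quotient.mk (Ideal.span {X ^ M}) f = Ideal.Quotient.mk (Ideal.span {X ^ M}) g ↔
      ∀ n < M, coeff n f = coeff n g := by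
  rw [Ideal.Quotient.eq, Ideal.mem_span_singleton, X_pow_dvd_iff]
  simp only [map_sub, sub_eq_zero]

theorem mk_span_X_pow_pow_eq_zero {g : R⟦X⟧} (hg : constantCoeff g = 0) (M : ℕ) :
    Ideal.Quotient.mk (Ideal.span {X ^ M}) g ^ M = 0 := by
  rw [← map_pow, Ideal.Quotient.eq_zero_iff_mem, Ideal.mem_span_singleton]
  exact pow_dvd_pow_of_dvd (X_dvd_iff.2 hg) M

theorem mk_comp {f g : R⟦X⟧} (hg : constantCoeff g = 0) (M : ℕ) :
    Ideal.Quotient.mk (Ideal.span {X ^ M}) (comp f g) =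
      Ideal.Quotient.mk (Ideal.span {X ^ M}) (∑ k ∈ range M, coeff k f • g ^ k) := by
  refine mk_span_X_pow_eq_mk_iff.2 fun n hn => ?_
  simp [coeff_comp_eq_sum_range hg hn, map_sum]

end Comp

theorem IsNilpotent.exp_sum {R ι : Type*} [CommRing R] [Module ℚ R] {s : Finset ι}
    {f : ι → R} (hf : ∀ i ∈ s, IsNilpotent (f i)) :
    IsNilpotent.exp (∑ i ∈ s, f i) = ∏ i ∈ s, IsNilpotent.exp (f i) := by
  classical
  induction s using Finset.induction_on with
  | empty => simp [IsNilpotent.exp_zero]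
  | insert a s ha ih =>
    rw [sum_insert ha, prod_insert ha, IsNilpotent.exp_add_of_commute (Commute.all _ _)
      (hf a (mem_insert_self a s)) (isNilpotent_sum fun i hi => hf i (mem_insert_of_mem hi)),
      ih fun i hi => hf i (mem_insert_of_mem hi)]

theorem mk_comp_exp {g : A⟦X⟧} (hg : constantCoeff g = 0) (M : ℕ) :
    Ideal.Quotient.mk (Ideal.span {X ^ M}) (comp (exp A) g) =
      IsNilpotent.exp (Ideal.Quotient.mk (Ideal.span {X ^ M}) g) := by
  rw [mk_comp hg M, IsNilpotent.exp_eq_sum (mk_span_X_pow_pow_eq_zero hg M), map_sum]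
  refine sum_congr rfl fun k _ => ?_
  rw [coeff_exp, ← map_pow, algebraMap_smul, one_div, map_rat_smul]

theorem constantCoeff_logOneSub : constantCoeff (logOneSub : A⟦X⟧) = 0 := by
  rw [← coeff_zero_eq_constantCoeff_apply, logOneSub, coeff_mk, if_pos rfl]

theorem coeff_logOneSub_div {i d : ℕ} (hd : d ∣ i) (hi : i ≠ 0) :
    coeff (i / d) (logOneSub : A⟦X⟧) = -algebraMap ℚ A (d / i) := by
  obtain ⟨q, rfl⟩ := hd
  have hq : q ≠ 0 := right_ne_zero_of_mul hi
  have hd : d ≠ 0 := left_ne_zero_of_mul hi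
  rw [logOneSub, coeff_mk, Nat.mul_div_cancel_left q (Nat.pos_of_ne_zero hd), if_neg hq,
    ← map_neg]
  congr 1
  push_cast
  field_simp

theorem coeff_sum_neg_smul_logOneSub_comp_X_pow (c : ℕ → A) {i N : ℕ} (hi : i ≤ N) :
    coeff i (∑ k ∈ range N, (-c (k + 1)) • comp logOneSub (X ^ (k + 1))) =
      algebraMap ℚ A (1 / i) * ∑ d ∈ i.divisors, (d : A) * c d := by
  have hterm : ∀ d ≠ 0, -c d * coeff i (comp logOneSub (X ^ d)) =
      if d ∈ i.divisors then algebraMap ℚ A (1 / i) * (d * c d) else 0 := by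
    intro d hd
    rw [coeff_comp_X_pow _ hd]
    by_cases hmem : d ∈ i.divisors
    · obtain ⟨hdvd, hi0⟩ := Nat.mem_divisors.1 hmem
      rw [if_pos hdvd, if_pos hmem, coeff_logOneSub_div hdvd hi0, neg_mul_neg, div_eq_mul_one_div,
        map_mul, map_natCast]
      ring
    · rw [if_neg hmem]
      split_ifs with hdvd
      · obtain rfl : i = 0 := by simpa [hdvd] using hmem
        simp [logOneSub]
      · rw [mul_zero]
  have hdiv : i.divisors ⊆ range (N + 1) := fun d hd =>
    mem_range.2 (Nat.lt_succ_of_le ((Nat.divisor_le hd).trans hi))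
  simp only [map_sum, coeff_smul, smul_eq_mul]
  rw [sum_congr rfl fun k _ => hterm (k + 1) k.succ_ne_zero, mul_sum,
    ← inter_eq_right.2 hdiv, ← sum_ite_mem, sum_range_succ',
    if_neg fun h => (Nat.pos_of_mem_divisors h).ne' rfl, add_zero,
    inter_eq_right.2 hdiv]

/-- If `Σ_{d∣n} d·α_d = xₙ` for all `n ≥ 1`, then
`∏_{n≥1} (1 - zⁿ)^{-αₙ} = exp(Σ_{n≥1} (xₙ/n) zⁿ)`. -/
theorem necklProd_eq_exp (α x : ℕ → A)
    (h : ∀ n, 1 ≤ n → ∑ d ∈ n.divisors, ((d : ℕ) : A) * α d = x n) :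
    necklProd α =
      comp (PowerSeries.exp A)
        (PowerSeries.mk fun n => if n = 0 then 0 else algebraMap ℚ A (1 / n) * x n) := by
  set T : A⟦X⟧ := mk fun n => if n = 0 then 0 else algebraMap ℚ A (1 / n) * x n
  set u : ℕ → A⟦X⟧ := fun k => (-α (k + 1)) • comp logOneSub (X ^ (k + 1))
  have hu : ∀ k, constantCoeff (u k) = 0 := fun k => by
    rw [constantCoeff_smul, constantCoeff_comp, constantCoeff_logOneSub, smul_zero]
  have hT : constantCoeff T = 0 := by
    rw [← coeff_zero_eq_constantCoeff_apply, coeff_mk, if_pos rfl]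
  ext N
  let π := Ideal.Quotient.mk (Ideal.span {(X : A⟦X⟧) ^ (N + 1)})
  suffices π (∏ k ∈ range N, necklFactor (α (k + 1)) (k + 1)) = π (comp (exp A) T) by
    rw [necklProd, coeff_mk]
    exact mk_span_X_pow_eq_mk_iff.1 this N N.lt_succ_self
  have hsum : π (∑ k ∈ range N, u k) = π T := mk_span_X_pow_eq_mk_iff.2 fun i hi => by
    rw [coeff_sum_neg_smul_logOneSub_comp_X_pow α (Nat.le_of_lt_succ hi), coeff_mk]
    rcases Nat.eq_zero_or_pos i with rfl | hi0
    · simp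
    · rw [if_neg hi0.ne', h i hi0]
  calc π (∏ k ∈ range N, necklFactor (α (k + 1)) (k + 1))
      = ∏ k ∈ range N, IsNilpotent.exp (π (u k)) := by
        rw [map_prod]
        exact prod_congr rfl fun k _ => mk_comp_exp (hu k) _
    _ = IsNilpotent.exp (π (∑ k ∈ range N, u k)) := by
        rw [map_sum, IsNilpotent.exp_sum fun k _ => ⟨_, mk_span_X_pow_pow_eq_zero (hu k) _⟩]
    _ = π (comp (exp A) T) := by rw [hsum, mk_comp_exp hT]
end

section
/- The n-th Faber polynomial Fₙ(b₁,…,bₙ) equals (−1)ⁿ times the determinant of the n×n matrix Aₙ whose (i,1) entry is i·b_i, whose (i,i+1) entry is 1, whose (i,j) entry for 2 ≤ j ≤ i is b_{i−j+1}, and 0 otherwise; equivalently Fₙ(0) = det(0·I − Aₙ) = (−1)ⁿ det Aₙ. -/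
variable {A : Type*} [CommRing A] [Algebra ℚ A]

/-- Composition `f ∘ g` of formal power series (`g` with zero constant term),
defined coefficientwise. -/
noncomputable def pscomp (f g : PowerSeries A) : PowerSeries A :=
  PowerSeries.mk fun n => ∑ k ∈ Finset.range (n + 1),
    PowerSeries.coeff k f * PowerSeries.coeff n (g ^ k)

/-- The series `log(1+u) = Σ_{m≥1} (-1)^{m+1} uᵐ/m`. -/
noncomputable def logOneAdd : PowerSeries A :=
  PowerSeries.mk fun m => if m = 0 then 0 else algebraMap ℚ A ((-1) ^ (m + 1) / m)

/-- `h(z) = 1 + b₁z + b₂z² + ⋯`. -/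
noncomputable def hSeries (b : ℕ → A) : PowerSeries A :=
  PowerSeries.mk fun n => if n = 0 then 1 else b n

/-- The `n`-th Faber polynomial `Fₙ(b₁,…,bₙ) = Fₙ(0)`, defined by
`-log h(z) = Σ_{n≥1} Fₙ(b₁,…,bₙ) zⁿ/n`. -/
noncomputable def faber (b : ℕ → A) (n : ℕ) : A :=
  (-(n : ℚ)) • PowerSeries.coeff n (pscomp logOneAdd (hSeries b - 1))

/-- The Hessenberg matrix `Aₙ` with first column `(b₁, 2b₂, …, n·bₙ)ᵀ`, superdiagonal
`1`'s, entries `b_{i-j+1}` below the diagonal (columns `≥ 2`), and `0` elsewhere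
(written in `0`-indexed form). -/
noncomputable def faberMatrix (b : ℕ → A) (n : ℕ) : Matrix (Fin n) (Fin n) A :=
  fun i j =>
    if (j : ℕ) = 0 then ((i : ℕ) + 1 : A) * b ((i : ℕ) + 1)
    else if (j : ℕ) = (i : ℕ) + 1 then 1
    else if (j : ℕ) ≤ (i : ℕ) then b ((i : ℕ) - (j : ℕ) + 1)
    else 0

/-! For `n = j + 1` both sides are the `j`-th coefficient of a power series `G` with
`h * G = -h'`, and `G` is determined by this since `h` is a unit. For the Faber polynomials this
is `G = -(log h)'`; it is checked on the truncations `Σ_{k ≤ N} (-1)^{k+1} uᵏ/k` of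
`log (1 + u)`, `u = h - 1`, whose derivatives are geometric sums in `-u` times `u'`. For the
determinants it is the Laplace expansion of `A_{j+1}` along its last row: deleting the last row
and column `k` leaves a block lower triangular matrix with diagonal blocks `A_k` and a unit
lower triangular matrix. -/

open PowerSeries Finset

section PowerSeries

variable {R : Type*}

theorem coeff_pow_eq_zero_of_lt [CommSemiring R] {f : R⟦X⟧} (hf : constantCoeff f = 0)
    {n k : ℕ} (h : n < k) : coeff n (f ^ k) = 0 :=
  coeff_of_lt_order n <| (Nat.cast_lt.mpr h).trans_le (le_order_pow_of_constantCoeff_eq_zero k hf)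

theorem coeff_mul_derivative_congr [CommSemiring R] (g : R⟦X⟧) {f f' : R⟦X⟧} {m : ℕ}
    (h : ∀ q ≤ m + 1, coeff q f = coeff q f') :
    coeff m (g * d⁄dX R f) = coeff m (g * d⁄dX R f') := by
  simp only [coeff_mul, coeff_derivative]
  refine sum_congr rfl fun p hp => ?_
  rw [h (p.2 + 1) (by have := mem_antidiagonal.mp hp; omega)]

theorem coeff_pscomp_eq_coeff_partialSum [CommRing R] (f : R⟦X⟧) {g : R⟦X⟧}
    (hg : constantCoeff g = 0) {n N : ℕ} (hn : n ≤ N) :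
    coeff n (pscomp f g) = coeff n (∑ k ∈ range (N + 1), coeff k f • g ^ k) := by
  simp only [pscomp, coeff_mk, map_sum, map_smul, smul_eq_mul]
  refine sum_subset (range_subset_range.mpr (by omega : n + 1 ≤ N + 1)) fun k _ hk => ?_
  rw [coeff_pow_eq_zero_of_lt hg (by simpa using hk), mul_zero]

end PowerSeries

theorem natCast_succ_mul_coeff_succ_logOneAdd (k : ℕ) :
    ((k + 1 : ℕ) : A) * coeff (k + 1) (logOneAdd : A⟦X⟧) = (-1) ^ k := by
  rw [logOneAdd, coeff_mk, if_neg k.succ_ne_zero, ← map_natCast (algebraMap ℚ A), ← map_mul,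
    mul_div_cancel₀ _ (by positivity), map_pow, map_neg, map_one]
  ring

theorem derivative_logOneAdd_partialSum (u : A⟦X⟧) (N : ℕ) :
    d⁄dX A (∑ k ∈ range (N + 1), coeff k (logOneAdd : A⟦X⟧) • u ^ k)
      = (∑ j ∈ range N, (-u) ^ j) * d⁄dX A u := by
  rw [map_sum, sum_range_succ', sum_mul]
  simp only [pow_zero, Derivation.map_smul, Derivation.map_one_eq_zero, smul_zero, add_zero]
  refine sum_congr rfl fun j _ => ?_
  rw [Derivation.leibniz_pow, Nat.add_sub_cancel, ← Nat.cast_smul_eq_nsmul A, smul_smul,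
    mul_comm, natCast_succ_mul_coeff_succ_logOneAdd, neg_pow u, smul_eq_mul, smul_eq_C_mul,
    map_pow, map_neg, map_one, mul_assoc]

theorem one_add_mul_derivative_pscomp_logOneAdd {u : A⟦X⟧} (hu : constantCoeff u = 0) :
    (1 + u) * d⁄dX A (pscomp logOneAdd u) = d⁄dX A u := by
  ext m
  have htruncated : (1 + u) * d⁄dX A (∑ k ∈ range (m + 2), coeff k (logOneAdd : A⟦X⟧) • u ^ k)
      = d⁄dX A u - (-u) ^ (m + 1) * d⁄dX A u := by
    rw [derivative_logOneAdd_partialSum, ← mul_assoc, ← sub_neg_eq_add, mul_neg_geom_sum,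
      sub_mul, one_mul]
  have htail : coeff m ((-u) ^ (m + 1) * d⁄dX A u) = 0 := by
    rw [coeff_mul]
    refine sum_eq_zero fun p hp => ?_
    rw [coeff_pow_eq_zero_of_lt (by simp [hu]) (by have := mem_antidiagonal.mp hp; omega),
      zero_mul]
  rw [coeff_mul_derivative_congr _ fun q hq => coeff_pscomp_eq_coeff_partialSum _ hu hq,
    htruncated, map_sub, htail, sub_zero]

theorem hSeries_mul_mk_faber (b : ℕ → A) :
    hSeries b * mk (fun j => faber b (j + 1)) = -d⁄dX A (hSeries b) := by
  have hu : constantCoeff (hSeries b - 1) = 0 := by simp [hSeries]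
  have hF : mk (fun j => faber b (j + 1)) = -d⁄dX A (pscomp logOneAdd (hSeries b - 1)) := by
    ext j
    rw [coeff_mk, map_neg, coeff_derivative, faber, Algebra.smul_def, map_neg, map_natCast]
    push_cast
    ring
  calc hSeries b * mk (fun j => faber b (j + 1))
      = -((1 + (hSeries b - 1)) * d⁄dX A (pscomp logOneAdd (hSeries b - 1))) := by
        rw [hF, add_sub_cancel, mul_neg]
    _ = -d⁄dX A (hSeries b) := by
        rw [one_add_mul_derivative_pscomp_logOneAdd hu, map_sub, derivative_one, sub_zero]

section faberMatrix

variable {R : Type*} [CommRing R] (b : ℕ → R)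

theorem faberMatrix_apply_eq_zero {n : ℕ} {i j : Fin n} (h : (i : ℕ) + 1 < j) :
    faberMatrix b n i j = 0 := by
  rw [faberMatrix, if_neg (by omega), if_neg (by omega), if_neg (by omega)]

theorem faberMatrix_apply_eq_one {n : ℕ} {i j : Fin n} (h : (j : ℕ) = i + 1) :
    faberMatrix b n i j = 1 := by
  rw [faberMatrix, if_neg (by omega), if_pos h]

theorem det_submatrix_last_succAbove_faberMatrix (m : ℕ) (k : Fin (m + 1)) :
    ((faberMatrix b (m + 1)).submatrix (Fin.last m).succAbove k.succAbove).det
      = (faberMatrix b k).det := by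
  set M := (faberMatrix b (m + 1)).submatrix (Fin.last m).succAbove k.succAbove
  have hM : ∀ r c : Fin m, M r c = faberMatrix b (m + 1) r.castSucc
      (if (c : ℕ) < k then c.castSucc else c.succ) := by
    intro r c
    simp only [M, Matrix.submatrix_apply, Fin.succAbove_last, Fin.succAbove, Fin.lt_def,
      Fin.val_castSucc]
  rw [M.twoBlockTriangular_det' (fun c => (c : ℕ) < k) ?upperRight]
  case upperRight =>
    intro r hr c hc
    rw [hM, if_neg hc]
    exact faberMatrix_apply_eq_zero b (by simp; omega)
  have hupperLeft : (M.toSquareBlockProp fun c => (c : ℕ) < k).submatrix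
      (Fin.castLEOrderIso (Fin.is_le k)).toEquiv (Fin.castLEOrderIso (Fin.is_le k)).toEquiv
      = faberMatrix b k := by
    ext r c
    simp [Matrix.toSquareBlockProp, hM, faberMatrix]
  have hlowerRight : (M.toSquareBlockProp fun c => ¬(c : ℕ) < k).det = 1 := by
    rw [Matrix.det_of_isLowerTriangular _ ?triangular]
    case triangular =>
      intro r c hrc
      have hrc : (r : ℕ) < c := hrc
      simp only [Matrix.toSquareBlockProp, Matrix.toBlock_apply, hM, if_neg c.2]
      exact faberMatrix_apply_eq_zero b (by simp; omega)
    refine prod_eq_one fun c _ => ?_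
    simp only [Matrix.toSquareBlockProp, Matrix.toBlock_apply, hM, if_neg c.2]
    exact faberMatrix_apply_eq_one b (by simp)
  rw [hlowerRight, mul_one, ← hupperLeft, Matrix.det_submatrix_equiv_self]

theorem neg_one_pow_mul_det_faberMatrix_succ (m : ℕ) :
    (-1) ^ (m + 1) * (faberMatrix b (m + 1)).det
      = -((m + 1) * b (m + 1)
        + ∑ k ∈ range m, b (m - k) * ((-1) ^ (k + 1) * (faberMatrix b (k + 1)).det)) := by
  have hsign : ∀ k : ℕ, (-1 : R) ^ (m + 1) * (-1) ^ (m + k) = -(-1) ^ k := by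
    intro k
    rw [← pow_add, show m + 1 + (m + k) = 2 * m + k + 1 by ring, pow_succ, pow_add, pow_mul]
    simp
  have hterm : ∀ k : Fin (m + 1), (-1) ^ (m + 1) * ((-1) ^ ((Fin.last m : ℕ) + k)
      * faberMatrix b (m + 1) (Fin.last m) k
      * ((faberMatrix b (m + 1)).submatrix (Fin.last m).succAbove k.succAbove).det)
      = -(faberMatrix b (m + 1) (Fin.last m) k * ((-1) ^ (k : ℕ) * (faberMatrix b k).det)) := by
    intro k
    rw [det_submatrix_last_succAbove_faberMatrix, Fin.val_last]
    linear_combination (faberMatrix b (m + 1) (Fin.last m) k * (faberMatrix b k).det) * hsign k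
  rw [Matrix.det_succ_row _ (Fin.last m), mul_sum, sum_congr rfl fun k _ => hterm k,
    sum_neg_distrib, Fin.sum_univ_succ, neg_inj, ← Fin.sum_univ_eq_sum_range]
  congr 1
  · rw [Fin.val_zero, Matrix.det_fin_zero]
    simp [faberMatrix]
  · refine Fintype.sum_congr _ _ fun i => ?_
    have hi := i.2
    simp only [faberMatrix, Fin.val_succ, Fin.val_last]
    rw [if_neg (by omega), if_neg (by omega), if_pos (by omega),
      show m - (i + 1) + 1 = m - i by omega]

theorem hSeries_mul_mk_det_faberMatrix :
    hSeries b * mk (fun j => (-1) ^ (j + 1) * (faberMatrix b (j + 1)).det)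
      = -d⁄dX R (hSeries b) := by
  ext m
  rw [coeff_mul, ← Nat.sum_antidiagonal_swap, Nat.sum_antidiagonal_eq_sum_range_succ_mk,
    sum_range_succ, map_neg, coeff_derivative]
  simp only [hSeries, coeff_mk, Prod.swap, Nat.sub_self, if_true, one_mul, Nat.succ_ne_zero,
    if_false]
  rw [neg_one_pow_mul_det_faberMatrix_succ, sum_congr rfl fun k hk => by
    rw [if_neg (by have := mem_range.mp hk; omega)]]
  ring

end faberMatrix

/-- The `n`-th Faber polynomial equals `(-1)ⁿ det Aₙ`. -/
theorem faber_eq_det (b : ℕ → A) (n : ℕ) (hn : 1 ≤ n) :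
    faber b n = (-1) ^ n * (faberMatrix b n).det := by
  obtain ⟨m, rfl⟩ := Nat.exists_eq_add_of_le' hn
  have hunit : IsUnit (hSeries b) := isUnit_iff_constantCoeff.mpr (by simp [hSeries])
  have hseries := hunit.mul_left_cancel
    ((hSeries_mul_mk_faber b).trans (hSeries_mul_mk_det_faberMatrix b).symm)
  simpa using congrArg (coeff m) hseries
end

section
/- Moments determine free cumulants and vice versa: given a linear functional φ on a noncommutative probability space, the moment-cumulant relations φ(a₁⋯aₙ) = Σ_{π ∈ NC(n)} ∏_{V ∈ π} k_{|V|}(a_{v₁},…,a_{v_s}) uniquely define multilinear functionals kₙ by induction on n, with k₁ = φ. -/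
noncomputable def NCPartitions (n : ℕ) : Finset (Finset (Finset (Fin n))) :=
  @Finset.filter _
    (fun P =>
      (∀ B ∈ P, B.Nonempty) ∧
      (∀ x : Fin n, ∃! B, B ∈ P ∧ x ∈ B) ∧
      ¬∃ p₁ q₁ p₂ q₂ : Fin n, p₁ < q₁ ∧ q₁ < p₂ ∧ p₂ < q₂ ∧
        (∃ B ∈ P, p₁ ∈ B ∧ p₂ ∈ B) ∧ (∃ B ∈ P, q₁ ∈ B ∧ q₂ ∈ B) ∧
        ¬∃ B ∈ P, q₁ ∈ B ∧ p₂ ∈ B)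
    (Classical.decPred _) Finset.univ

lemma mem_NCP {n : ℕ} {P : Finset (Finset (Fin n))} :
    P ∈ NCPartitions n ↔
      (∀ B ∈ P, B.Nonempty) ∧
      (∀ x : Fin n, ∃! B, B ∈ P ∧ x ∈ B) ∧
      ¬∃ p₁ q₁ p₂ q₂ : Fin n, p₁ < q₁ ∧ q₁ < p₂ ∧ p₂ < q₂ ∧
        (∃ B ∈ P, p₁ ∈ B ∧ p₂ ∈ B) ∧ (∃ B ∈ P, q₁ ∈ B ∧ q₂ ∈ B) ∧
        ¬∃ B ∈ P, q₁ ∈ B ∧ p₂ ∈ B := by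
  unfold NCPartitions
  simp [Finset.mem_filter]

lemma full_mem (n : ℕ) :
    ({Finset.univ} : Finset (Finset (Fin (n+1)))) ∈ NCPartitions (n+1) := by
  rw [mem_NCP]
  refine ⟨?_, ?_, ?_⟩
  · intro B hB
    rw [Finset.mem_singleton] at hB
    subst hB
    exact Finset.univ_nonempty
  · intro x
    exact ⟨Finset.univ, ⟨Finset.mem_singleton_self _, Finset.mem_univ _⟩,
      fun B hB => Finset.mem_singleton.mp hB.1⟩
  · rintro ⟨p₁, q₁, p₂, q₂, _, _, _, _, _, hno⟩
    exact hno ⟨Finset.univ, Finset.mem_singleton_self _, Finset.mem_univ _, Finset.mem_univ _⟩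

lemma eq_full_of_univ_mem {n : ℕ} {P : Finset (Finset (Fin (n+1)))}
    (hP : P ∈ NCPartitions (n+1)) (h : Finset.univ ∈ P) : P = {Finset.univ} := by
  obtain ⟨hne, huniq, -⟩ := mem_NCP.mp hP
  apply Finset.eq_singleton_iff_unique_mem.mpr
  refine ⟨h, fun B hB => ?_⟩
  obtain ⟨x, hx⟩ := hne B hB
  obtain ⟨C, -, hu⟩ := huniq x
  rw [hu B ⟨hB, hx⟩, hu Finset.univ ⟨h, Finset.mem_univ _⟩]

lemma block_card_le {n : ℕ} {P : Finset (Finset (Fin (n+1)))} {B : Finset (Fin (n+1))}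
    (hP : P ∈ NCPartitions (n+1)) (hne : P ≠ {Finset.univ}) (hB : B ∈ P) : B.card ≤ n := by
  by_contra h
  push_neg at h
  have hBu : B = Finset.univ := by
    apply Finset.eq_univ_of_card
    have : B.card ≤ Finset.univ.card := Finset.card_le_card (Finset.subset_univ B)
    simp only [Finset.card_univ, Fintype.card_fin] at this ⊢
    omega
  exact hne (eq_full_of_univ_mem hP (hBu ▸ hB))

lemma block_nonempty {n : ℕ} {P : Finset (Finset (Fin n))} {B : Finset (Fin n)}
    (hP : P ∈ NCPartitions n) (hB : B ∈ P) : B.Nonempty :=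
  (mem_NCP.mp hP).1 B hB

lemma ofFn_update {n : ℕ} (a : Fin n → A') (i : Fin n) (x : A') [DecidableEq (Fin n)] :
    List.ofFn (Function.update a i x) = (List.ofFn a).set i x := by
  apply List.ext_get
  · simp
  · intro j h1 h2
    simp only [List.get_eq_getElem, List.getElem_set, List.getElem_ofFn]
    by_cases hj : (i : ℕ) = j
    · simp [Function.update, ← hj]
    · rw [if_neg hj]
      apply Function.update_of_ne
      intro hc
      exact hj (by rw [← hc])

section

variable {A : Type*} [Ring A] [Algebra ℂ A]

noncomputable def cum (φ : A →ₗ[ℂ] ℂ) : (n : ℕ) → (Fin (n+1) → A) → ℂ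
  | n, a =>
    φ (List.ofFn a).prod -
      ∑ P ∈ (NCPartitions (n+1)).erase {Finset.univ},
        ∏ B ∈ P,
          if h : B.card - 1 < n ∧ B.card = B.card - 1 + 1 then
            cum φ (B.card - 1) (fun i => a ((B.orderIsoOfFin h.2 i : Fin (n+1))))
          else 0
termination_by n => n
decreasing_by exact h.1

lemma cum_def (φ : A →ₗ[ℂ] ℂ) (n : ℕ) (a : Fin (n+1) → A) :
    cum φ n a =
    φ (List.ofFn a).prod -
      ∑ P ∈ (NCPartitions (n+1)).erase {Finset.univ},
        ∏ B ∈ P,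
          if h : B.card - 1 < n ∧ B.card = B.card - 1 + 1 then
            cum φ (B.card - 1) (fun i => a ((B.orderIsoOfFin h.2 i : Fin (n+1))))
          else 0 := by
  rw [cum]

/-- The embedding of `Fin (univ.card - 1 + 1)` into `Fin (n+1)` via `orderIsoOfFin` is
essentially the identity. -/
lemma univ_orderIso_val (n : ℕ)
    (h : (Finset.univ : Finset (Fin (n+1))).card = (Finset.univ : Finset (Fin (n+1))).card - 1 + 1)
    (i : Fin ((Finset.univ : Finset (Fin (n+1))).card - 1 + 1)) :
    (((Finset.univ : Finset (Fin (n+1))).orderIsoOfFin h i : Fin (n+1)) : ℕ) = (i : ℕ) := by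
  have hc : (Finset.univ : Finset (Fin (n+1))).card = n + 1 := by simp
  have hd : (Finset.univ : Finset (Fin (n+1))).card - 1 + 1 = n + 1 := by omega
  have key : (fun j : Fin ((Finset.univ : Finset (Fin (n+1))).card - 1 + 1) =>
      (⟨(j : ℕ), by omega⟩ : Fin (n+1))) = (Finset.univ : Finset (Fin (n+1))).orderEmbOfFin h := by
    apply Finset.orderEmbOfFin_unique
    · intro j; exact Finset.mem_univ _
    · intro j₁ j₂ hlt
      exact hlt
  rw [Finset.coe_orderIsoOfFin_apply, ← key]

lemma k_cast (k : (n : ℕ) → (Fin (n + 1) → A) → ℂ) {m n : ℕ} (e : m = n)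
    (f : Fin (m+1) → A) (g : Fin (n+1) → A)
    (hfg : ∀ i : Fin (m+1), f i = g ⟨(i : ℕ), by omega⟩) : k m f = k n g := by
  subst e
  congr 1
  funext i
  rw [hfg i]

/-- The full-partition term: for any family `k`, the term of the block `univ` equals `k n a`. -/
lemma full_term (k : (n : ℕ) → (Fin (n + 1) → A) → ℂ) (n : ℕ) (a : Fin (n+1) → A)
    (h : (Finset.univ : Finset (Fin (n+1))).card = (Finset.univ : Finset (Fin (n+1))).card - 1 + 1) :
    k ((Finset.univ : Finset (Fin (n+1))).card - 1)
      (fun i => a ((Finset.univ.orderIsoOfFin h i : Fin (n+1)))) = k n a := by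
  have hc : (Finset.univ : Finset (Fin (n+1))).card = n + 1 := by simp
  apply k_cast k (by omega)
  intro i
  congr 1
  apply Fin.ext
  simpa using univ_orderIso_val n h i


lemma prod_blocks_update (φ : A →ₗ[ℂ] ℂ) {n : ℕ} {P : Finset (Finset (Fin (n+1)))}
    (hP : P ∈ NCPartitions (n+1)) (hne : P ≠ {Finset.univ})
    (a : Fin (n+1) → A) (i : Fin (n+1)) (z : A)
    {B₀ : Finset (Fin (n+1))} (hB₀ : B₀ ∈ P) (hi : i ∈ B₀)
    (h₀ : B₀.card = B₀.card - 1 + 1) :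
    (∏ B ∈ P, if h : B.card - 1 < n ∧ B.card = B.card - 1 + 1 then
        cum φ (B.card - 1)
          (fun j => Function.update a i z ((B.orderIsoOfFin h.2 j : Fin (n+1)))) else 0)
    = cum φ (B₀.card - 1)
        (Function.update (fun j => a ((B₀.orderIsoOfFin h₀ j : Fin (n+1))))
          ((B₀.orderIsoOfFin h₀).symm ⟨i, hi⟩) z)
      * ∏ B ∈ P.erase B₀, (if h : B.card - 1 < n ∧ B.card = B.card - 1 + 1 then
          cum φ (B.card - 1) (fun j => a ((B.orderIsoOfFin h.2 j : Fin (n+1)))) else 0) := by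
  rw [← Finset.mul_prod_erase _ _ hB₀]
  have hc1 : B₀.card ≤ n := block_card_le hP hne hB₀
  have hc2 : 1 ≤ B₀.card := Finset.card_pos.mpr (block_nonempty hP hB₀)
  congr 1
  · rw [dif_pos ⟨by omega, h₀⟩]
    congr 1
    funext j
    by_cases hji : ((B₀.orderIsoOfFin h₀ j : Fin (n+1))) = i
    · have hj0 : j = (B₀.orderIsoOfFin h₀).symm ⟨i, hi⟩ := by
        have h' : B₀.orderIsoOfFin h₀ j = ⟨i, hi⟩ := Subtype.ext hji
        rw [← h']
        exact ((B₀.orderIsoOfFin h₀).symm_apply_apply j).symm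
      rw [hji, hj0, Function.update_self, Function.update_self]
    · rw [Function.update_of_ne hji]
      have hjne : j ≠ (B₀.orderIsoOfFin h₀).symm ⟨i, hi⟩ := by
        intro hc
        apply hji
        rw [hc]
        have := (B₀.orderIsoOfFin h₀).apply_symm_apply ⟨i, hi⟩
        rw [this]
      rw [Function.update_of_ne hjne]
  · apply Finset.prod_congr rfl
    intro B hB
    have hBP : B ∈ P := Finset.mem_of_mem_erase hB
    have hBne : B ≠ B₀ := Finset.ne_of_mem_erase hB
    have hiB : i ∉ B := by
      intro hiB
      obtain ⟨C, -, hu⟩ := (mem_NCP.mp hP).2.1 i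
      exact hBne ((hu B ⟨hBP, hiB⟩).trans (hu B₀ ⟨hB₀, hi⟩).symm)
    by_cases h : B.card - 1 < n ∧ B.card = B.card - 1 + 1
    · rw [dif_pos h, dif_pos h]
      congr 1
      funext j
      apply Function.update_of_ne
      intro hc
      exact hiB (hc ▸ (B.orderIsoOfFin h.2 j).2)
    · rw [dif_neg h, dif_neg h]


lemma prod_ofFn_update {n : ℕ} (a : Fin (n+1) → A) (i : Fin (n+1)) (z : A) :
    (List.ofFn (Function.update a i z)).prod =
      ((List.ofFn a).take i).prod * z * ((List.ofFn a).drop (i+1)).prod := by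
  rw [ofFn_update, List.prod_set]
  congr 2
  rw [if_pos]
  simpa using i.isLt

lemma cum_multilinear (φ : A →ₗ[ℂ] ℂ) :
    ∀ (n : ℕ) (a : Fin (n+1) → A) (i : Fin (n+1)) (x y : A) (c : ℂ),
      cum φ n (Function.update a i (x + y)) =
          cum φ n (Function.update a i x) + cum φ n (Function.update a i y) ∧
      cum φ n (Function.update a i (c • x)) = c * cum φ n (Function.update a i x) := by
  intro n
  induction n using Nat.strong_induction_on with
  | _ n IH =>
  intro a i x y c
  have hφadd : φ (List.ofFn (Function.update a i (x + y))).prod =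
      φ (List.ofFn (Function.update a i x)).prod +
        φ (List.ofFn (Function.update a i y)).prod := by
    rw [prod_ofFn_update, prod_ofFn_update, prod_ofFn_update, mul_add, add_mul, map_add]
  have hφsmul : φ (List.ofFn (Function.update a i (c • x))).prod =
      c * φ (List.ofFn (Function.update a i x)).prod := by
    rw [prod_ofFn_update, prod_ofFn_update, mul_smul_comm, smul_mul_assoc, map_smul,
      smul_eq_mul]
  have hSadd : (∑ P ∈ (NCPartitions (n+1)).erase {Finset.univ},
        ∏ B ∈ P, if h : B.card - 1 < n ∧ B.card = B.card - 1 + 1 then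
          cum φ (B.card - 1)
            (fun j => Function.update a i (x + y) ((B.orderIsoOfFin h.2 j : Fin (n+1)))) else 0)
      = (∑ P ∈ (NCPartitions (n+1)).erase {Finset.univ},
        ∏ B ∈ P, if h : B.card - 1 < n ∧ B.card = B.card - 1 + 1 then
          cum φ (B.card - 1)
            (fun j => Function.update a i x ((B.orderIsoOfFin h.2 j : Fin (n+1)))) else 0)
      + (∑ P ∈ (NCPartitions (n+1)).erase {Finset.univ},
        ∏ B ∈ P, if h : B.card - 1 < n ∧ B.card = B.card - 1 + 1 then
          cum φ (B.card - 1)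
            (fun j => Function.update a i y ((B.orderIsoOfFin h.2 j : Fin (n+1)))) else 0) := by
    rw [← Finset.sum_add_distrib]
    apply Finset.sum_congr rfl
    intro P hPe
    have hP : P ∈ NCPartitions (n+1) := Finset.mem_of_mem_erase hPe
    have hne : P ≠ {Finset.univ} := Finset.ne_of_mem_erase hPe
    obtain ⟨B₀, ⟨hB₀, hi⟩, -⟩ := (mem_NCP.mp hP).2.1 i
    have hc1 : B₀.card ≤ n := block_card_le hP hne hB₀
    have hc2 : 1 ≤ B₀.card := Finset.card_pos.mpr (block_nonempty hP hB₀)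
    have h₀ : B₀.card = B₀.card - 1 + 1 := by omega
    rw [prod_blocks_update φ hP hne a i (x + y) hB₀ hi h₀,
        prod_blocks_update φ hP hne a i x hB₀ hi h₀,
        prod_blocks_update φ hP hne a i y hB₀ hi h₀,
        (IH (B₀.card - 1) (by omega) _ _ x y c).1]
    ring
  have hSsmul : (∑ P ∈ (NCPartitions (n+1)).erase {Finset.univ},
        ∏ B ∈ P, if h : B.card - 1 < n ∧ B.card = B.card - 1 + 1 then
          cum φ (B.card - 1)
            (fun j => Function.update a i (c • x) ((B.orderIsoOfFin h.2 j : Fin (n+1)))) else 0)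
      = c * (∑ P ∈ (NCPartitions (n+1)).erase {Finset.univ},
        ∏ B ∈ P, if h : B.card - 1 < n ∧ B.card = B.card - 1 + 1 then
          cum φ (B.card - 1)
            (fun j => Function.update a i x ((B.orderIsoOfFin h.2 j : Fin (n+1)))) else 0) := by
    rw [Finset.mul_sum]
    apply Finset.sum_congr rfl
    intro P hPe
    have hP : P ∈ NCPartitions (n+1) := Finset.mem_of_mem_erase hPe
    have hne : P ≠ {Finset.univ} := Finset.ne_of_mem_erase hPe
    obtain ⟨B₀, ⟨hB₀, hi⟩, -⟩ := (mem_NCP.mp hP).2.1 i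
    have hc1 : B₀.card ≤ n := block_card_le hP hne hB₀
    have hc2 : 1 ≤ B₀.card := Finset.card_pos.mpr (block_nonempty hP hB₀)
    have h₀ : B₀.card = B₀.card - 1 + 1 := by omega
    rw [prod_blocks_update φ hP hne a i (c • x) hB₀ hi h₀,
        prod_blocks_update φ hP hne a i x hB₀ hi h₀,
        (IH (B₀.card - 1) (by omega) _ _ x y c).2]
    ring
  constructor
  · rw [cum_def, cum_def, cum_def, hφadd, hSadd]; ring
  · rw [cum_def, cum_def, hφsmul, hSsmul]; ring


lemma cum_moment (φ : A →ₗ[ℂ] ℂ) (n : ℕ) (a : Fin (n+1) → A) :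
    φ (List.ofFn a).prod =
      ∑ P ∈ NCPartitions (n+1), ∏ B ∈ P,
        if h : B.card = B.card - 1 + 1 then
          cum φ (B.card - 1) (fun i => a ((B.orderIsoOfFin h i : Fin (n+1))))
        else 0 := by
  rw [← Finset.add_sum_erase _ _ (full_mem n)]
  have hcard : (Finset.univ : Finset (Fin (n+1))).card = n + 1 := by simp
  have hfull : (∏ B ∈ ({Finset.univ} : Finset (Finset (Fin (n+1)))),
      if h : B.card = B.card - 1 + 1 then
        cum φ (B.card - 1) (fun i => a ((B.orderIsoOfFin h i : Fin (n+1))))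
      else 0) = cum φ n a := by
    rw [Finset.prod_singleton, dif_pos (by omega : (Finset.univ : Finset (Fin (n+1))).card =
      (Finset.univ : Finset (Fin (n+1))).card - 1 + 1)]
    exact full_term (cum φ) n a _
  rw [hfull]
  have hrest : (∑ P ∈ (NCPartitions (n+1)).erase {Finset.univ}, ∏ B ∈ P,
      if h : B.card = B.card - 1 + 1 then
        cum φ (B.card - 1) (fun i => a ((B.orderIsoOfFin h i : Fin (n+1))))
      else 0)
    = ∑ P ∈ (NCPartitions (n+1)).erase {Finset.univ}, ∏ B ∈ P,
      if h : B.card - 1 < n ∧ B.card = B.card - 1 + 1 then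
        cum φ (B.card - 1) (fun i => a ((B.orderIsoOfFin h.2 i : Fin (n+1))))
      else 0 := by
    apply Finset.sum_congr rfl
    intro P hPe
    have hP : P ∈ NCPartitions (n+1) := Finset.mem_of_mem_erase hPe
    have hne : P ≠ {Finset.univ} := Finset.ne_of_mem_erase hPe
    apply Finset.prod_congr rfl
    intro B hB
    have hc1 : B.card ≤ n := block_card_le hP hne hB
    have hc2 : 1 ≤ B.card := Finset.card_pos.mpr (block_nonempty hP hB)
    rw [dif_pos (by omega : B.card = B.card - 1 + 1),
      dif_pos (⟨by omega, by omega⟩ : B.card - 1 < n ∧ B.card = B.card - 1 + 1)]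
  rw [hrest, cum_def]
  ring

lemma cum_zero (φ : A →ₗ[ℂ] ℂ) (a : A) : cum φ 0 (fun _ => a) = φ a := by
  rw [cum_def]
  have he : (NCPartitions 1).erase {Finset.univ} = ∅ := by
    rw [Finset.eq_empty_iff_forall_notMem]
    intro P hPe
    have hP : P ∈ NCPartitions 1 := Finset.mem_of_mem_erase hPe
    have hne : P ≠ {Finset.univ} := Finset.ne_of_mem_erase hPe
    obtain ⟨B₀, ⟨hB₀, -⟩, -⟩ := (mem_NCP.mp hP).2.1 0
    have hc1 : B₀.card ≤ 0 := block_card_le hP hne hB₀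
    have hc2 : 1 ≤ B₀.card := Finset.card_pos.mpr (block_nonempty hP hB₀)
    omega
  rw [he]
  simp

lemma cum_unique (φ : A →ₗ[ℂ] ℂ) (k : (n : ℕ) → (Fin (n + 1) → A) → ℂ)
    (hmom : ∀ n, 1 ≤ n → ∀ a : Fin n → A,
      φ (List.ofFn a).prod =
        ∑ P ∈ NCPartitions n, ∏ B ∈ P,
          if h : B.card = B.card - 1 + 1 then
            k (B.card - 1) (fun i => a ((B.orderIsoOfFin h i : Fin n)))
          else 0) :
    ∀ (n : ℕ) (f : Fin (n+1) → A), k n f = cum φ n f := by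
  intro n
  induction n using Nat.strong_induction_on with
  | _ n IH =>
  intro f
  have h1 := hmom (n+1) (by omega) f
  have h2 := cum_moment φ n f
  have key : ∀ (K : (n : ℕ) → (Fin (n + 1) → A) → ℂ),
      (∑ P ∈ NCPartitions (n+1), ∏ B ∈ P,
        if h : B.card = B.card - 1 + 1 then
          K (B.card - 1) (fun i => f ((B.orderIsoOfFin h i : Fin (n+1))))
        else 0)
      = K n f + ∑ P ∈ (NCPartitions (n+1)).erase {Finset.univ}, ∏ B ∈ P,
        if h : B.card = B.card - 1 + 1 then
          K (B.card - 1) (fun i => f ((B.orderIsoOfFin h i : Fin (n+1))))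
        else 0 := by
    intro K
    rw [← Finset.add_sum_erase _ _ (full_mem n)]
    congr 1
    have hcard : (Finset.univ : Finset (Fin (n+1))).card = n + 1 := by simp
    rw [Finset.prod_singleton, dif_pos (by omega : (Finset.univ : Finset (Fin (n+1))).card =
      (Finset.univ : Finset (Fin (n+1))).card - 1 + 1)]
    exact full_term K n f _
  rw [key k] at h1
  rw [key (cum φ)] at h2
  have hrest : (∑ P ∈ (NCPartitions (n+1)).erase {Finset.univ}, ∏ B ∈ P,
      if h : B.card = B.card - 1 + 1 then
        k (B.card - 1) (fun i => f ((B.orderIsoOfFin h i : Fin (n+1))))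
      else 0)
    = ∑ P ∈ (NCPartitions (n+1)).erase {Finset.univ}, ∏ B ∈ P,
      if h : B.card = B.card - 1 + 1 then
        cum φ (B.card - 1) (fun i => f ((B.orderIsoOfFin h i : Fin (n+1))))
      else 0 := by
    apply Finset.sum_congr rfl
    intro P hPe
    have hP : P ∈ NCPartitions (n+1) := Finset.mem_of_mem_erase hPe
    have hne : P ≠ {Finset.univ} := Finset.ne_of_mem_erase hPe
    apply Finset.prod_congr rfl
    intro B hB
    have hc1 : B.card ≤ n := block_card_le hP hne hB
    have hc2 : 1 ≤ B.card := Finset.card_pos.mpr (block_nonempty hP hB)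
    by_cases h : B.card = B.card - 1 + 1
    · rw [dif_pos h, dif_pos h, IH (B.card - 1) (by omega)]
    · rw [dif_neg h, dif_neg h]
  rw [hrest] at h1
  have := h1.symm.trans h2
  exact add_right_cancel this

end

/-- Moments determine free cumulants and vice versa: for a linear functional `φ` on a
noncommutative probability space `(𝒜, φ)`, there is a unique family of multilinear
functionals `kₙ` (here `k (n-1)` stands for `kₙ`) with `k₁ = φ` satisfying the
moment-cumulant relations
`φ(a₁⋯aₙ) = Σ_{π ∈ NC(n)} Π_{V ∈ π} k_{|V|}(a_{v₁},…,a_{v_s})`. -/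
theorem exists_unique_free_cumulants (A : Type*) [Ring A] [Algebra ℂ A]
    (φ : A →ₗ[ℂ] ℂ) (hφ : φ 1 = 1) :
    ∃! k : (n : ℕ) → (Fin (n + 1) → A) → ℂ,
      (∀ (n : ℕ) (a : Fin (n + 1) → A) (i : Fin (n + 1)) (x y : A) (c : ℂ),
        k n (Function.update a i (x + y)) =
            k n (Function.update a i x) + k n (Function.update a i y) ∧
        k n (Function.update a i (c • x)) = c * k n (Function.update a i x)) ∧
      (∀ a : A, k 0 (fun _ => a) = φ a) ∧
      (∀ n, 1 ≤ n → ∀ a : Fin n → A,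
        φ (List.ofFn a).prod =
          ∑ P ∈ NCPartitions n, ∏ B ∈ P,
            if h : B.card = B.card - 1 + 1 then
              k (B.card - 1) (fun i => a ((B.orderIsoOfFin h i : Fin n)))
            else 0) := by
  refine ⟨cum φ, ⟨cum_multilinear φ, cum_zero φ, ?_⟩, ?_⟩
  · intro n hn a
    obtain ⟨m, rfl⟩ : ∃ m, n = m + 1 := ⟨n - 1, by omega⟩
    exact cum_moment φ m a
  · intro k hk
    funext n f
    exact cum_unique φ k hk.2.2 n f
end

section
/- Let l be the left shift (creation) operator on the full Fock space of a one-dimensional Hilbert space and τ the vacuum state. For a formal series a = l + Σ_{n≥0} α_{n+1} (l*)ⁿ, the moments τ(aᵏ) of a equal the moments of the distribution whose R-transform is ℛ(z) = Σ_{n≥0} α_{n+1} zⁿ; i.e., the free cumulants of a with respect to τ are kₙ(a) = αₙ. -/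
noncomputable def aOp (α : ℕ → ℂ) : (ℕ →₀ ℂ) →ₗ[ℂ] (ℕ →₀ ℂ) :=
  Finsupp.lsum ℂ fun k =>
    LinearMap.toSpanSingleton ℂ (ℕ →₀ ℂ)
      (Finsupp.single (k + 1) 1 +
        ∑ n ∈ Finset.range (k + 1), α (n + 1) • Finsupp.single (k - n) (1 : ℂ))

namespace AopAux

/-- Open (uncovered) points at time `m`. -/
def Opens (m : ℕ) (P : Finset (Finset ℕ)) : Finset ℕ := Finset.range m \ P.sup id

/-- Invariant for partial non-crossing partitions at time `m` with `k` open points. -/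
def Inv (m k : ℕ) (P : Finset (Finset ℕ)) : Prop :=
  (∀ B ∈ P, B ⊆ Finset.range m) ∧
  (∀ B ∈ P, B.Nonempty) ∧
  (∀ B ∈ P, ∀ C ∈ P, B ≠ C → Disjoint B C) ∧
  (Opens m P).card = k ∧
  (∀ B ∈ P, ∀ C ∈ P, ∀ p₁ q₁ p₂ q₂ : ℕ, p₁ ∈ B → p₂ ∈ B → q₁ ∈ C → q₂ ∈ C →
      p₁ < q₁ → q₁ < p₂ → p₂ < q₂ → B = C) ∧
  (∀ B ∈ P, ∀ p ∈ Opens m P, ∀ b₁ ∈ B, ∀ b₂ ∈ B, b₁ < p → p < b₂ → False)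

noncomputable def St (m k : ℕ) : Finset (Finset (Finset ℕ)) :=
  @Finset.filter _ (fun P => Inv m k P) (Classical.decPred _)
    ((Finset.range m).powerset.powerset)

noncomputable def F (α : ℕ → ℂ) (m k : ℕ) : ℂ := ∑ P ∈ St m k, ∏ B ∈ P, α B.card

lemma mem_St {m k : ℕ} {P : Finset (Finset ℕ)} : P ∈ St m k ↔ Inv m k P := by
  classical
  constructor
  · intro h; exact (Finset.mem_filter.mp h).2
  · intro h
    refine Finset.mem_filter.mpr ⟨?_, h⟩
    rw [Finset.mem_powerset]
    intro B hB
    rw [Finset.mem_powerset]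
    exact h.1 B hB

lemma subset_sup {P : Finset (Finset ℕ)} {B : Finset ℕ} (h : B ∈ P) : B ⊆ P.sup id :=
  Finset.le_sup (f := id) h

lemma St_empty_of_gt {m k : ℕ} (h : m < k) : St m k = ∅ := by
  rw [Finset.eq_empty_iff_forall_notMem]
  intro P hP
  have hI := mem_St.mp hP
  have h1 : (Opens m P).card ≤ m := by
    have : Opens m P ⊆ Finset.range m := Finset.sdiff_subset
    simpa using Finset.card_le_card this
  have h2 := hI.2.2.2.1
  omega

lemma F_zero_of_gt (α : ℕ → ℂ) {m k : ℕ} (h : m < k) : F α m k = 0 := by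
  simp [F, St_empty_of_gt h]

lemma St_zero (k : ℕ) : St 0 k = if k = 0 then {∅} else ∅ := by
  ext P
  rw [mem_St]
  constructor
  · intro hI
    have hP : P = ∅ := by
      rw [Finset.eq_empty_iff_forall_notMem]
      intro B hB
      have h1 := hI.1 B hB
      have h2 := hI.2.1 B hB
      obtain ⟨x, hx⟩ := h2
      simpa using h1 hx
    have hk : k = 0 := by
      have := hI.2.2.2.1
      rw [hP] at this
      simpa [Opens] using this.symm
    simp [hP, hk]
  · intro hP
    by_cases hk : k = 0
    · subst hk
      rw [if_pos rfl, Finset.mem_singleton] at hP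
      subst hP
      refine ⟨by simp, by simp, by simp, by simp [Opens], by simp, by simp [Opens]⟩
    · simp [hk] at hP

lemma F_base (α : ℕ → ℂ) (k : ℕ) : F α 0 k = if k = 0 then 1 else 0 := by
  by_cases hk : k = 0 <;> simp [F, St_zero, hk]

/-- the largest `j` elements of `S`. -/
def topJ (S : Finset ℕ) (j : ℕ) : Finset ℕ :=
  S.filter (fun p => (S.filter (fun q => p < q)).card < j)

lemma topJ_subset (S : Finset ℕ) (j : ℕ) : topJ S j ⊆ S := Finset.filter_subset _ _

lemma lt_of_not_topJ {S : Finset ℕ} {j : ℕ} {p q : ℕ} (hp : p ∈ S) (hp' : p ∉ topJ S j)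
    (hq : q ∈ topJ S j) : p < q := by
  by_contra hqp
  push_neg at hqp
  rw [topJ, Finset.mem_filter] at hq hp'
  push_neg at hp'
  have h1 := hp' hp
  have h2 : (S.filter (fun x => p < x)).card ≤ (S.filter (fun x => q < x)).card := by
    apply Finset.card_le_card
    intro x hx
    rw [Finset.mem_filter] at hx ⊢
    exact ⟨hx.1, lt_of_le_of_lt hqp hx.2⟩
  omega

lemma topJ_card {S : Finset ℕ} {j : ℕ} (h : j ≤ S.card) : (topJ S j).card = j := by
  classical
  set f : ℕ → ℕ := fun p => (S.filter (fun q => p < q)).card with hf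
  have hanti : ∀ p ∈ S, ∀ q ∈ S, p < q → f q < f p := by
    intro p hp q hq hpq
    apply Finset.card_lt_card
    constructor
    · intro x hx
      simp only [Finset.mem_filter] at hx ⊢
      exact ⟨hx.1, hpq.trans hx.2⟩
    · intro hsub
      have : q ∈ S.filter (fun x => q < x) := hsub (by simp [hq, hpq])
      simp at this
  have hinj : Set.InjOn f S := by
    intro p hp q hq hpq
    rcases lt_trichotomy p q with h' | h' | h'
    · exact absurd hpq.symm (ne_of_lt (hanti p hp q hq h'))
    · exact h'
    · exact absurd hpq (ne_of_lt (hanti q hq p hp h'))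
  have hbound : ∀ p ∈ S, f p < S.card := by
    intro p hp
    have h1 : S.filter (fun q => p < q) ⊆ S.erase p := by
      intro x hx
      rw [Finset.mem_filter] at hx
      exact Finset.mem_erase.mpr ⟨(hx.2).ne', hx.1⟩
    calc f p ≤ (S.erase p).card := Finset.card_le_card h1
    _ < S.card := by
        rw [Finset.card_erase_of_mem hp]
        have : 1 ≤ S.card := Finset.card_pos.mpr ⟨p, hp⟩
        omega
  have himg : S.image f = Finset.range S.card := by
    apply Finset.eq_of_subset_of_card_le
    · intro t ht
      obtain ⟨p, hp, rfl⟩ := Finset.mem_image.mp ht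
      exact Finset.mem_range.mpr (hbound p hp)
    · rw [Finset.card_range, Finset.card_image_of_injOn hinj]
  have hDimg : (topJ S j).image f = Finset.range j := by
    ext t
    constructor
    · intro ht
      obtain ⟨p, hp, rfl⟩ := Finset.mem_image.mp ht
      rw [topJ, Finset.mem_filter] at hp
      exact Finset.mem_range.mpr hp.2
    · intro ht
      have ht' := Finset.mem_range.mp ht
      have : t ∈ S.image f := by
        rw [himg]
        exact Finset.mem_range.mpr (lt_of_lt_of_le ht' h)
      obtain ⟨p, hp, rfl⟩ := Finset.mem_image.mp this
      exact Finset.mem_image.mpr ⟨p, Finset.mem_filter.mpr ⟨hp, ht'⟩, rfl⟩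
  have := Finset.card_image_of_injOn (hinj.mono (fun x hx => (topJ_subset S j) hx))
  rw [hDimg, Finset.card_range] at this
  exact this.symm

lemma topJ_eq {S A B : Finset ℕ} {j : ℕ} (hU : S = A ∪ B) (hlt : ∀ a ∈ A, ∀ b ∈ B, a < b)
    (hd : Disjoint A B) (hc : B.card = j) : topJ S j = B := by
  ext p
  rw [topJ, Finset.mem_filter]
  constructor
  · rintro ⟨hpS, hcard⟩
    rw [hU, Finset.mem_union] at hpS
    rcases hpS with hpA | hpB
    · exfalso
      have hsub : B ⊆ S.filter (fun x => p < x) := by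
        intro b hb
        rw [Finset.mem_filter]
        exact ⟨by rw [hU]; exact Finset.mem_union_right _ hb, hlt p hpA b hb⟩
      have := Finset.card_le_card hsub
      omega
    · exact hpB
  · intro hpB
    have hpS : p ∈ S := by rw [hU]; exact Finset.mem_union_right _ hpB
    refine ⟨hpS, ?_⟩
    have hsub : S.filter (fun x => p < x) ⊆ B.erase p := by
      intro x hx
      rw [Finset.mem_filter] at hx
      have hxB : x ∈ B := by
        rcases (by rw [hU] at hx; exact Finset.mem_union.mp hx.1) with hxA | hxB
        · exact absurd (hlt x hxA p hpB) (by omega)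
        · exact hxB
      exact Finset.mem_erase.mpr ⟨(hx.2).ne', hxB⟩
    have h1 := Finset.card_le_card hsub
    rw [Finset.card_erase_of_mem hpB] at h1
    have : 1 ≤ B.card := Finset.card_pos.mpr ⟨p, hpB⟩
    omega

noncomputable def blk (P : Finset (Finset ℕ)) (x : ℕ) : Finset ℕ :=
  if h : ∃ B ∈ P, x ∈ B then h.choose else ∅

lemma blk_spec {P : Finset (Finset ℕ)} {x : ℕ} (h : ∃ B ∈ P, x ∈ B) :
    blk P x ∈ P ∧ x ∈ blk P x := by
  rw [blk, dif_pos h]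
  exact ⟨h.choose_spec.1, h.choose_spec.2⟩

lemma blk_eq {P : Finset (Finset ℕ)} (hdis : ∀ B ∈ P, ∀ C ∈ P, B ≠ C → Disjoint B C)
    {B : Finset ℕ} {x : ℕ} (hB : B ∈ P) (hx : x ∈ B) : blk P x = B := by
  have h : ∃ C ∈ P, x ∈ C := ⟨B, hB, hx⟩
  obtain ⟨h1, h2⟩ := blk_spec h
  by_contra hne
  exact Finset.disjoint_left.mp (hdis _ h1 B hB hne) h2 hx

lemma step_bwd (m k j : ℕ) (Q : Finset (Finset ℕ)) (hQ : Q ∈ St m (k + j)) :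
    insert m (topJ (Opens m Q) j) ∉ Q ∧
    m ∈ insert m (topJ (Opens m Q) j) ∧
    (insert m (topJ (Opens m Q) j)).card - 1 = j ∧
    insert (insert m (topJ (Opens m Q) j)) Q ∈ St (m + 1) k ∧
    m ∈ (insert (insert m (topJ (Opens m Q) j)) Q).sup id := by
  obtain ⟨hsub, hne, hdis, hop, hnc, hsp⟩ := mem_St.mp hQ
  set D := topJ (Opens m Q) j with hD
  have hDsub : D ⊆ Opens m Q := topJ_subset _ _
  have hDcard : D.card = j := topJ_card (by rw [hop]; omega)
  have hOsub : Opens m Q ⊆ Finset.range m := Finset.sdiff_subset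
  have hOlt : ∀ x ∈ Opens m Q, x < m := fun x hx => Finset.mem_range.mp (hOsub hx)
  have hOnsup : ∀ x ∈ Opens m Q, x ∉ Q.sup id := fun x hx => (Finset.mem_sdiff.mp hx).2
  have hsupQ : ∀ x ∈ Q.sup id, x < m := by
    intro x hx
    obtain ⟨C, hC, hxC⟩ := by simpa using Finset.mem_sup.mp hx
    exact Finset.mem_range.mp (hsub C hC hxC)
  have hmD : m ∉ D := fun h => absurd (hOlt m (hDsub h)) (by omega)
  set B' := insert m D with hB'
  have hmB' : m ∈ B' := Finset.mem_insert_self _ _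
  have hB'le : ∀ x ∈ B', x ≤ m := by
    intro x hx
    rcases Finset.mem_insert.mp hx with rfl | hx
    · exact le_refl _
    · exact le_of_lt (hOlt x (hDsub hx))
  have hB'card : B'.card = j + 1 := by
    rw [hB', Finset.card_insert_of_notMem hmD, hDcard]
  have hB'Q : B' ∉ Q := by
    intro h
    exact absurd (hsupQ m (Finset.mem_sup.mpr ⟨B', h, hmB'⟩)) (by omega)
  set P' := insert B' Q with hP'
  have hmemsup : ∀ x, x ∈ P'.sup id ↔ x ∈ B' ∨ x ∈ Q.sup id := by
    intro x
    rw [hP', Finset.sup_insert]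
    exact Finset.mem_union
  have hOpens' : Opens (m + 1) P' = Opens m Q \ D := by
    ext x
    simp only [Opens, Finset.mem_sdiff, Finset.mem_range, hmemsup]
    constructor
    · rintro ⟨hx1, hx2⟩
      push_neg at hx2
      obtain ⟨hxB', hxQ⟩ := hx2
      have hxm : x ≠ m := fun h => hxB' (h ▸ hmB')
      have hxD : x ∉ D := fun h => hxB' (Finset.mem_insert_of_mem h)
      exact ⟨⟨by omega, hxQ⟩, hxD⟩
    · rintro ⟨⟨hx1, hx2⟩, hx3⟩
      refine ⟨by omega, ?_⟩
      rintro (hxB' | hxQ)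
      · rcases Finset.mem_insert.mp hxB' with rfl | hxD
        · omega
        · exact hx3 hxD
      · exact hx2 hxQ
  have hdisjBQ : ∀ C ∈ Q, Disjoint B' C := by
    intro C hC
    rw [Finset.disjoint_left]
    intro x hxB hxC
    rcases Finset.mem_insert.mp hxB with rfl | hxD
    · exact absurd (Finset.mem_range.mp (hsub C hC hxC)) (by omega)
    · exact hOnsup x (hDsub hxD) (Finset.mem_sup.mpr ⟨C, hC, hxC⟩)
  have hP'mem : P' ∈ St (m + 1) k := by
    rw [mem_St]
    refine ⟨?_, ?_, ?_, ?_, ?_, ?_⟩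
    · intro C hC
      rcases Finset.mem_insert.mp hC with rfl | hC
      · intro x hx
        exact Finset.mem_range.mpr (by have := hB'le x hx; omega)
      · exact (hsub C hC).trans (Finset.range_subset_range.mpr (by omega))
    · intro C hC
      rcases Finset.mem_insert.mp hC with rfl | hC
      · exact ⟨m, hmB'⟩
      · exact hne C hC
    · intro C₁ h₁ C₂ h₂ hne'
      rcases Finset.mem_insert.mp h₁ with rfl | h₁ <;>
        rcases Finset.mem_insert.mp h₂ with rfl | h₂
      · exact absurd rfl hne'
      · exact hdisjBQ C₂ h₂
      · exact (hdisjBQ C₁ h₁).symm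
      · exact hdis C₁ h₁ C₂ h₂ hne'
    · rw [hOpens', Finset.card_sdiff_of_subset hDsub, hop, hDcard]
      omega
    · intro B₁ hB₁ B₂ hB₂ p₁ q₁ p₂ q₂ hp₁ hp₂ hq₁ hq₂ h1 h2 h3
      rcases Finset.mem_insert.mp hB₁ with rfl | hB₁ <;>
        rcases Finset.mem_insert.mp hB₂ with rfl | hB₂
      · rfl
      · exfalso
        have hq₂m : q₂ < m := Finset.mem_range.mp (hsub B₂ hB₂ hq₂)
        have hp₂D : p₂ ∈ D := by
          rcases Finset.mem_insert.mp hp₂ with rfl | h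
          · omega
          · exact h
        exact hsp B₂ hB₂ p₂ (hDsub hp₂D) q₁ hq₁ q₂ hq₂ h2 h3 |>.elim
      · exfalso
        have hp₂m : p₂ < m := Finset.mem_range.mp (hsub B₁ hB₁ hp₂)
        have hq₁D : q₁ ∈ D := by
          rcases Finset.mem_insert.mp hq₁ with rfl | h
          · omega
          · exact h
        exact hsp B₁ hB₁ q₁ (hDsub hq₁D) p₁ hp₁ p₂ hp₂ h1 h2
      · exact hnc B₁ hB₁ B₂ hB₂ p₁ q₁ p₂ q₂ hp₁ hp₂ hq₁ hq₂ h1 h2 h3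
    · intro C hC p hp b₁ hb₁ b₂ hb₂ hlt₁ hlt₂
      rw [hOpens', Finset.mem_sdiff] at hp
      rcases Finset.mem_insert.mp hC with rfl | hC
      · have hb₁D : b₁ ∈ D := by
          rcases Finset.mem_insert.mp hb₁ with rfl | h
          · have := hB'le b₂ hb₂; omega
          · exact h
        exact absurd (lt_of_not_topJ hp.1 hp.2 hb₁D) (by omega)
      · exact hsp C hC p hp.1 b₁ hb₁ b₂ hb₂ hlt₁ hlt₂
  exact ⟨hB'Q, hmB', by omega, hP'mem,
    Finset.mem_sup.mpr ⟨B', Finset.mem_insert_self _ _, hmB'⟩⟩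

lemma step_fwd (m k : ℕ) (P : Finset (Finset ℕ)) (hP : P ∈ St (m + 1) k)
    (hm : m ∈ P.sup id) :
    blk P m ∈ P ∧ m ∈ blk P m ∧ 1 ≤ (blk P m).card ∧ (blk P m).card - 1 ≤ m ∧
    P.erase (blk P m) ∈ St m (k + ((blk P m).card - 1)) ∧
    topJ (Opens m (P.erase (blk P m))) ((blk P m).card - 1) = (blk P m).erase m := by
  obtain ⟨hsub, hne, hdis, hop, hnc, hsp⟩ := mem_St.mp hP
  have hex : ∃ B ∈ P, m ∈ B := by simpa using Finset.mem_sup.mp hm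
  obtain ⟨hBP, hmB⟩ := blk_spec hex
  set B := blk P m with hBdef
  set Q := P.erase B with hQdef
  set j := B.card - 1 with hjdef
  have hBpos : 1 ≤ B.card := Finset.card_pos.mpr ⟨m, hmB⟩
  have hQsub : ∀ C ∈ Q, C ⊆ Finset.range m := by
    intro C hC x hx
    have hCP := Finset.mem_of_mem_erase hC
    have hCne := Finset.ne_of_mem_erase hC
    have hx1 : x < m + 1 := Finset.mem_range.mp (hsub C hCP hx)
    have hxm : x ≠ m := by
      rintro rfl
      exact Finset.disjoint_left.mp (hdis C hCP B hBP hCne) hx hmB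
    exact Finset.mem_range.mpr (by omega)
  have hBerase_sub : B.erase m ⊆ Finset.range m := by
    intro x hx
    have h1 := Finset.mem_of_mem_erase hx
    have h2 := Finset.ne_of_mem_erase hx
    have := Finset.mem_range.mp (hsub B hBP h1)
    exact Finset.mem_range.mpr (by omega)
  have hjm : j ≤ m := by
    have h1 : (B.erase m).card = j := by rw [Finset.card_erase_of_mem hmB]
    have := Finset.card_le_card hBerase_sub
    rw [h1, Finset.card_range] at this
    exact this
  have hOQ : Opens m Q = Opens (m + 1) P ∪ B.erase m := by
    ext x
    constructor
    · intro hx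
      obtain ⟨hx1, hx2⟩ := Finset.mem_sdiff.mp hx
      have hx1' := Finset.mem_range.mp hx1
      by_cases hxB : x ∈ B
      · exact Finset.mem_union_right _ (Finset.mem_erase.mpr ⟨by omega, hxB⟩)
      · refine Finset.mem_union_left _ (Finset.mem_sdiff.mpr
          ⟨Finset.mem_range.mpr (by omega), ?_⟩)
        intro hsupx
        obtain ⟨C, hC, hxC⟩ := by simpa using Finset.mem_sup.mp hsupx
        have hCB : C ≠ B := fun h => hxB (h ▸ hxC)
        exact hx2 (Finset.mem_sup.mpr ⟨C, Finset.mem_erase.mpr ⟨hCB, hC⟩, hxC⟩)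
    · intro hx
      rcases Finset.mem_union.mp hx with hx | hx
      · obtain ⟨hx1, hx2⟩ := Finset.mem_sdiff.mp hx
        have hx1' := Finset.mem_range.mp hx1
        have hxm : x ≠ m := by rintro rfl; exact hx2 hm
        refine Finset.mem_sdiff.mpr ⟨Finset.mem_range.mpr (by omega), ?_⟩
        intro hsupx
        obtain ⟨C, hC, hxC⟩ := by simpa using Finset.mem_sup.mp hsupx
        exact hx2 (Finset.mem_sup.mpr ⟨C, Finset.mem_of_mem_erase hC, hxC⟩)
      · have hx1 := Finset.mem_of_mem_erase hx
        have hx2 := Finset.ne_of_mem_erase hx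
        refine Finset.mem_sdiff.mpr ⟨hBerase_sub hx, ?_⟩
        intro hsupx
        obtain ⟨C, hC, hxC⟩ := by simpa using Finset.mem_sup.mp hsupx
        have hCP := Finset.mem_of_mem_erase hC
        have hCne := Finset.ne_of_mem_erase hC
        exact Finset.disjoint_left.mp (hdis C hCP B hBP hCne) hxC hx1
  have hdisjU : Disjoint (Opens (m + 1) P) (B.erase m) := by
    rw [Finset.disjoint_left]
    intro x hx hx'
    exact (Finset.mem_sdiff.mp hx).2
      (Finset.mem_sup.mpr ⟨B, hBP, Finset.mem_of_mem_erase hx'⟩)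
  have hlt : ∀ p ∈ Opens (m + 1) P, ∀ b ∈ B.erase m, p < b := by
    intro p hp b hb
    have hbB := Finset.mem_of_mem_erase hb
    have hpb : p ≠ b := fun h => Finset.disjoint_left.mp hdisjU hp (h ▸ hb)
    have hpm : p ≠ m := by rintro rfl; exact (Finset.mem_sdiff.mp hp).2 hm
    have hpr := Finset.mem_range.mp (Finset.mem_sdiff.mp hp).1
    by_contra hc
    push_neg at hc
    have hbp : b < p := by omega
    exact hsp B hBP p hp b hbB m hmB hbp (by omega)
  have hcardE : (B.erase m).card = j := by rw [Finset.card_erase_of_mem hmB]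
  have hopQ : (Opens m Q).card = k + j := by
    rw [hOQ, Finset.card_union_of_disjoint hdisjU, hop, hcardE]
  have htop : topJ (Opens m Q) j = B.erase m := topJ_eq hOQ hlt hdisjU hcardE
  have hQmem : Q ∈ St m (k + j) := by
    rw [mem_St]
    refine ⟨hQsub, fun C hC => hne C (Finset.mem_of_mem_erase hC), ?_, hopQ, ?_, ?_⟩
    · intro C₁ h₁ C₂ h₂ hne'
      exact hdis C₁ (Finset.mem_of_mem_erase h₁) C₂ (Finset.mem_of_mem_erase h₂) hne'
    · intro B₁ hB₁ B₂ hB₂ p₁ q₁ p₂ q₂ hp₁ hp₂ hq₁ hq₂ h1 h2 h3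
      exact hnc B₁ (Finset.mem_of_mem_erase hB₁) B₂ (Finset.mem_of_mem_erase hB₂)
        p₁ q₁ p₂ q₂ hp₁ hp₂ hq₁ hq₂ h1 h2 h3
    · intro C hC p hp b₁ hb₁ b₂ hb₂ hlt₁ hlt₂
      rw [hOQ] at hp
      rcases Finset.mem_union.mp hp with hp | hp
      · exact hsp C (Finset.mem_of_mem_erase hC) p hp b₁ hb₁ b₂ hb₂ hlt₁ hlt₂
      · have hpB := Finset.mem_of_mem_erase hp
        have hb₂m : b₂ < m := Finset.mem_range.mp (hQsub C hC hb₂)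
        have := hnc C (Finset.mem_of_mem_erase hC) B hBP b₁ p b₂ m hb₁ hb₂ hpB hmB
          hlt₁ hlt₂ hb₂m
        exact (Finset.ne_of_mem_erase hC) this
  exact ⟨hBP, hmB, hBpos, hjm, hQmem, htop⟩

lemma F_rec (α : ℕ → ℂ) (m k : ℕ) :
    F α (m + 1) k = (if k = 0 then 0 else F α m (k - 1)) +
      ∑ j ∈ Finset.range (m + 1), α (j + 1) * F α m (k + j) := by
  classical
  rw [F, ← Finset.sum_filter_add_sum_filter_not (St (m + 1) k)
    (fun P => m ∈ P.sup id) (fun P => ∏ B ∈ P, α B.card), add_comm]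
  congr 1
  · -- up-step part
    rcases k with _ | k'
    · rw [if_pos rfl]
      convert Finset.sum_empty
      rw [Finset.filter_eq_empty_iff]
      intro P hP hm
      have hI := mem_St.mp hP
      have hmO : m ∈ Opens (m + 1) P :=
        Finset.mem_sdiff.mpr ⟨Finset.mem_range.mpr (by omega), hm⟩
      rw [Finset.card_eq_zero.mp hI.2.2.2.1] at hmO
      simp at hmO
    · rw [if_neg (by omega)]
      have hset : (St (m + 1) (k' + 1)).filter (fun P => ¬ m ∈ P.sup id) = St m k' := by
        ext P
        rw [Finset.mem_filter, mem_St, mem_St]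
        constructor
        · rintro ⟨⟨hsub, hne, hdis, hop, hnc, hsp⟩, hm⟩
          have hmO : m ∈ Opens (m + 1) P :=
            Finset.mem_sdiff.mpr ⟨Finset.mem_range.mpr (by omega), hm⟩
          have hOe : Opens m P = (Opens (m + 1) P).erase m := by
            ext x
            simp only [Opens, Finset.mem_sdiff, Finset.mem_range, Finset.mem_erase]
            constructor
            · rintro ⟨h1, h2⟩; exact ⟨by omega, by omega, h2⟩
            · rintro ⟨h1, h2, h3⟩; exact ⟨by omega, h3⟩
          refine ⟨?_, hne, hdis, ?_, hnc, ?_⟩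
          · intro C hC x hx
            have := Finset.mem_range.mp (hsub C hC hx)
            have hxm : x ≠ m := by
              rintro rfl
              exact hm (Finset.mem_sup.mpr ⟨C, hC, hx⟩)
            exact Finset.mem_range.mpr (by omega)
          · rw [hOe, Finset.card_erase_of_mem hmO, hop]
            omega
          · intro C hC p hp b₁ hb₁ b₂ hb₂ h1 h2
            rw [hOe] at hp
            exact hsp C hC p (Finset.mem_of_mem_erase hp) b₁ hb₁ b₂ hb₂ h1 h2
        · rintro ⟨hsub, hne, hdis, hop, hnc, hsp⟩
          have hm : ¬ m ∈ P.sup id := by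
            intro hm
            obtain ⟨C, hC, hxC⟩ := by simpa using Finset.mem_sup.mp hm
            exact absurd (Finset.mem_range.mp (hsub C hC hxC)) (by omega)
          have hOe : Opens (m + 1) P = insert m (Opens m P) := by
            ext x
            simp only [Opens, Finset.mem_sdiff, Finset.mem_range, Finset.mem_insert]
            constructor
            · rintro ⟨h1, h2⟩
              by_cases hxm : x = m
              · exact Or.inl hxm
              · exact Or.inr ⟨by omega, h2⟩
            · rintro (rfl | ⟨h1, h2⟩)
              · exact ⟨by omega, hm⟩
              · exact ⟨by omega, h2⟩
          refine ⟨⟨fun C hC => (hsub C hC).trans (Finset.range_subset_range.mpr (by omega)),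
            hne, hdis, ?_, hnc, ?_⟩, hm⟩
          · rw [hOe, Finset.card_insert_of_notMem, hop]
            intro h
            exact absurd (Finset.mem_range.mp ((Finset.sdiff_subset : Opens m P ⊆ _) h))
              (by omega)
          · intro C hC p hp b₁ hb₁ b₂ hb₂ h1 h2
            rw [hOe, Finset.mem_insert] at hp
            rcases hp with rfl | hp
            · exact absurd (Finset.mem_range.mp (hsub C hC hb₂)) (by omega)
            · exact hsp C hC p hp b₁ hb₁ b₂ hb₂ h1 h2
      rw [hset]
      rfl
  · -- down-step part
    have hexp : ∀ j ∈ Finset.range (m + 1), α (j + 1) * F α m (k + j) =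
        ∑ Q ∈ St m (k + j), α (j + 1) * ∏ B ∈ Q, α B.card := by
      intro j _
      rw [F, Finset.mul_sum]
    rw [Finset.sum_congr rfl hexp]
    refine Eq.trans ?_ (Finset.sum_sigma (Finset.range (m + 1))
      (fun j => St m (k + j)) (fun x => α (x.1 + 1) * ∏ B ∈ x.2, α B.card))
    refine Finset.sum_nbij'
      (i := fun P => (⟨(blk P m).card - 1, P.erase (blk P m)⟩ : (_ : ℕ) × Finset (Finset ℕ)))
      (j := fun x => insert (insert m (topJ (Opens m x.2) x.1)) x.2) ?_ ?_ ?_ ?_ ?_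
    · intro P hP
      obtain ⟨hP', hm⟩ := Finset.mem_filter.mp hP
      obtain ⟨hBP, hmB, hBpos, hjm, hQmem, htop⟩ := step_fwd m k P hP' hm
      refine Finset.mem_sigma.mpr ⟨Finset.mem_range.mpr ?_, ?_⟩
      · show (blk P m).card - 1 < m + 1
        omega
      · show P.erase (blk P m) ∈ St m (k + ((blk P m).card - 1))
        exact hQmem
    · rintro ⟨j, Q⟩ hx
      obtain ⟨hj, hQ⟩ := Finset.mem_sigma.mp hx
      obtain ⟨h1, h2, h3, h4, h5⟩ := step_bwd m k j Q hQ
      exact Finset.mem_filter.mpr ⟨h4, h5⟩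
    · intro P hP
      obtain ⟨hP', hm⟩ := Finset.mem_filter.mp hP
      obtain ⟨hBP, hmB, hBpos, hjm, hQmem, htop⟩ := step_fwd m k P hP' hm
      dsimp only
      rw [htop, Finset.insert_erase hmB, Finset.insert_erase hBP]
    · rintro ⟨j, Q⟩ hx
      obtain ⟨hj, hQ⟩ := Finset.mem_sigma.mp hx
      obtain ⟨h1, h2, h3, h4, h5⟩ := step_bwd m k j Q hQ
      have hdis := (mem_St.mp h4).2.2.1
      have hblk : blk (insert (insert m (topJ (Opens m Q) j)) Q) m =
          insert m (topJ (Opens m Q) j) :=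
        blk_eq hdis (Finset.mem_insert_self _ _) h2
      dsimp only
      rw [hblk, h3, Finset.erase_insert h1]
    · intro P hP
      obtain ⟨hP', hm⟩ := Finset.mem_filter.mp hP
      obtain ⟨hBP, hmB, hBpos, hjm, hQmem, htop⟩ := step_fwd m k P hP' hm
      dsimp only
      rw [← Finset.mul_prod_erase P _ hBP]
      congr 2
      omega

lemma aOp_apply_k (α : ℕ → ℂ) (x : ℕ →₀ ℂ) (k : ℕ) :
    (aOp α x) k = ∑ i ∈ x.support,
      x i * ((if i + 1 = k then (1:ℂ) else 0) +
        ∑ n ∈ Finset.range (i + 1), α (n + 1) * (if i - n = k then (1:ℂ) else 0)) := by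
  rw [aOp, Finsupp.lsum_apply, Finsupp.sum_apply]
  simp only [Finsupp.sum, LinearMap.toSpanSingleton_apply]
  refine Finset.sum_congr rfl ?_
  intro i hi
  simp only [Finsupp.smul_apply, Finsupp.add_apply, Finsupp.single_apply,
    Finsupp.finset_sum_apply, smul_eq_mul]

lemma aOp_pow_eq_F (α : ℕ → ℂ) (m k : ℕ) :
    ((aOp α ^ m) (Finsupp.single 0 1)) k = F α m k := by
  induction m generalizing k with
  | zero =>
    rw [pow_zero, Module.End.one_apply, F_base, Finsupp.single_apply]
    by_cases hk : k = 0 <;> simp [hk, eq_comm]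
  | succ m ih =>
    have hx : ((aOp α) ^ (m + 1)) (Finsupp.single 0 1) =
        aOp α (((aOp α) ^ m) (Finsupp.single 0 1)) := by
      rw [pow_succ', Module.End.mul_apply]
    rw [hx]
    set x := ((aOp α) ^ m) (Finsupp.single 0 1) with hxdef
    have hsupp : x.support ⊆ Finset.range (m + 1) := by
      intro i hi
      rw [Finset.mem_range]
      by_contra hgt
      have : x i = 0 := by rw [ih]; exact F_zero_of_gt α (by omega)
      exact (Finsupp.mem_support_iff.mp hi) this
    have h1 : (aOp α x) k = ∑ i ∈ Finset.range (m + 1),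
        F α m i * ((if i + 1 = k then (1:ℂ) else 0) +
          ∑ n ∈ Finset.range (i + 1), α (n + 1) * (if i - n = k then (1:ℂ) else 0)) := by
      rw [aOp_apply_k]
      rw [Finset.sum_subset hsupp]
      · exact Finset.sum_congr rfl fun i _ => by rw [ih]
      · intro i _ hi
        rw [Finsupp.notMem_support_iff.mp hi, zero_mul]
    rw [h1, F_rec]
    simp only [mul_add]
    rw [Finset.sum_add_distrib]
    congr 1
    · -- first sum
      by_cases hk : k = 0
      · subst hk; simp
      · obtain ⟨k', rfl⟩ : ∃ k', k = k' + 1 := ⟨k - 1, by omega⟩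
        simp only [if_neg (by omega : ¬ k' + 1 = 0), Nat.add_sub_cancel]
        have : ∀ i ∈ Finset.range (m + 1),
            F α m i * (if i + 1 = k' + 1 then (1:ℂ) else 0) =
              if i = k' then F α m i else 0 := by
          intro i _
          by_cases h : i = k' <;> simp [h]
        rw [Finset.sum_congr rfl this, Finset.sum_ite_eq' (Finset.range (m + 1))]
        by_cases hk' : k' ∈ Finset.range (m + 1)
        · simp [hk']
        · rw [if_neg hk']
          rw [F_zero_of_gt α (by simpa using hk')]
    · -- second sum
      have hinner : ∀ i ∈ Finset.range (m + 1),
          F α m i * ∑ n ∈ Finset.range (i + 1), α (n + 1) * (if i - n = k then (1:ℂ) else 0) =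
            if k ≤ i then F α m i * α (i - k + 1) else 0 := by
        intro i _
        by_cases hki : k ≤ i
        · rw [if_pos hki]
          have : ∀ n ∈ Finset.range (i + 1),
              α (n + 1) * (if i - n = k then (1:ℂ) else 0) =
                if n = i - k then α (n + 1) else 0 := by
            intro n hn
            rw [Finset.mem_range] at hn
            by_cases h : n = i - k
            · rw [if_pos h, if_pos (by omega), mul_one]
            · rw [if_neg (by omega), if_neg h, mul_zero]
          rw [Finset.sum_congr rfl this, Finset.sum_ite_eq' (Finset.range (i + 1))]
          rw [if_pos (Finset.mem_range.mpr (by omega))]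
        · rw [if_neg hki]
          have : ∀ n ∈ Finset.range (i + 1),
              α (n + 1) * (if i - n = k then (1:ℂ) else 0) = 0 := by
            intro n hn
            rw [Finset.mem_range] at hn
            rw [if_neg (by omega), mul_zero]
          rw [Finset.sum_congr rfl this, Finset.sum_const_zero, mul_zero]
      rw [Finset.sum_congr rfl hinner]
      rw [← Finset.sum_filter]
      have hfil : (Finset.range (m + 1)).filter (fun i => k ≤ i) = Finset.Ico k (m + 1) := by
        ext i
        simp only [Finset.mem_filter, Finset.mem_range, Finset.mem_Ico]
        omega
      rw [hfil, Finset.sum_Ico_eq_sum_range]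
      have hre : ∀ j ∈ Finset.range (m + 1 - k),
          F α m (k + j) * α (k + j - k + 1) = α (j + 1) * F α m (k + j) := by
        intro j _
        rw [Nat.add_sub_cancel_left, mul_comm]
      rw [Finset.sum_congr rfl hre]
      refine Finset.sum_subset ?_ ?_
      · intro j hj
        rw [Finset.mem_range] at hj ⊢
        omega
      · intro j hj hj'
        rw [Finset.mem_range] at hj hj'
        rw [F_zero_of_gt α (by omega), mul_zero]

lemma mem_NC {n : ℕ} {P : Finset (Finset (Fin n))} : P ∈ NCPartitions n ↔
    ((∀ B ∈ P, B.Nonempty) ∧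
      (∀ x : Fin n, ∃! B, B ∈ P ∧ x ∈ B) ∧
      ¬∃ p₁ q₁ p₂ q₂ : Fin n, p₁ < q₁ ∧ q₁ < p₂ ∧ p₂ < q₂ ∧
        (∃ B ∈ P, p₁ ∈ B ∧ p₂ ∈ B) ∧ (∃ B ∈ P, q₁ ∈ B ∧ q₂ ∈ B) ∧
        ¬∃ B ∈ P, q₁ ∈ B ∧ p₂ ∈ B) := by
  classical
  rw [NCPartitions, Finset.filter_congr_decidable, Finset.mem_filter]
  exact ⟨fun h => h.2, fun h => ⟨Finset.mem_univ _, h⟩⟩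

lemma F_eq_NC (α : ℕ → ℂ) (n : ℕ) :
    F α n 0 = ∑ P ∈ NCPartitions n, ∏ B ∈ P, α B.card := by
  classical
  set e : Finset ℕ → Finset (Fin n) :=
    fun B => Finset.univ.filter (fun i => (i : ℕ) ∈ B) with he
  set g : Finset (Fin n) → Finset ℕ := fun B => B.image Fin.val with hg
  have hmem_e : ∀ (B : Finset ℕ) (i : Fin n), i ∈ e B ↔ (i : ℕ) ∈ B := by
    intro B i; simp [he]
  have hmem_g : ∀ (B : Finset (Fin n)) (x : ℕ), x ∈ g B ↔ ∃ i ∈ B, (i : ℕ) = x := by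
    intro B x; simp [hg]
  have hgsub : ∀ B : Finset (Fin n), g B ⊆ Finset.range n := by
    intro B x hx
    obtain ⟨i, _, rfl⟩ := (hmem_g B x).mp hx
    exact Finset.mem_range.mpr i.isLt
  have hge : ∀ B : Finset ℕ, B ⊆ Finset.range n → g (e B) = B := by
    intro B hB; ext x
    rw [hmem_g]
    constructor
    · rintro ⟨i, hi, rfl⟩; exact (hmem_e B i).mp hi
    · intro hx
      have hxn : x < n := Finset.mem_range.mp (hB hx)
      exact ⟨⟨x, hxn⟩, (hmem_e B ⟨x, hxn⟩).mpr hx, rfl⟩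
  have heg : ∀ B : Finset (Fin n), e (g B) = B := by
    intro B; ext i
    rw [hmem_e, hmem_g]
    constructor
    · rintro ⟨i', hi', hv⟩
      rwa [show i' = i from Fin.val_injective hv] at hi'
    · intro hi; exact ⟨i, hi, rfl⟩
  have hcard_e : ∀ B : Finset ℕ, B ⊆ Finset.range n → (e B).card = B.card := by
    intro B hB
    conv_rhs => rw [← hge B hB]
    rw [hg, Finset.card_image_of_injective _ Fin.val_injective]
  rw [F]
  refine Finset.sum_nbij' (i := fun P => P.image e) (j := fun P => P.image g)
    ?_ ?_ ?_ ?_ ?_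
  · -- maps into NCPartitions
    intro P hP
    have hI := mem_St.mp hP
    obtain ⟨hsub, hne, hdis, hop, hnc, _⟩ := hI
    have hsup : P.sup id = Finset.range n := by
      apply Finset.Subset.antisymm
      · exact Finset.sup_le fun B hB => hsub B hB
      · intro x hx
        by_contra hx'
        have : x ∈ Opens n P := Finset.mem_sdiff.mpr ⟨hx, hx'⟩
        rw [Finset.card_eq_zero.mp hop] at this
        simp at this
    have hex : ∀ x : Fin n, ∃ B ∈ P, (x : ℕ) ∈ B := by
      intro x
      have : (x : ℕ) ∈ P.sup id := by rw [hsup]; exact Finset.mem_range.mpr x.isLt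
      simpa using Finset.mem_sup.mp this
    have huniq : ∀ B ∈ P, ∀ C ∈ P, ∀ x : ℕ, x ∈ B → x ∈ C → B = C := by
      intro B hB C hC x hxB hxC
      by_contra hne'
      exact Finset.disjoint_left.mp (hdis B hB C hC hne') hxB hxC
    rw [mem_NC]
    refine ⟨?_, ?_, ?_⟩
    · intro B' hB'
      obtain ⟨B, hB, rfl⟩ := Finset.mem_image.mp hB'
      obtain ⟨x, hx⟩ := hne B hB
      have hxn : x < n := Finset.mem_range.mp (hsub B hB hx)
      exact ⟨⟨x, hxn⟩, (hmem_e B ⟨x, hxn⟩).mpr hx⟩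
    · intro x
      obtain ⟨B, hB, hxB⟩ := hex x
      refine ⟨e B, ⟨Finset.mem_image_of_mem e hB, (hmem_e B x).mpr hxB⟩, ?_⟩
      rintro C' ⟨hC', hxC'⟩
      obtain ⟨C, hC, rfl⟩ := Finset.mem_image.mp hC'
      rw [huniq C hC B hB x ((hmem_e C x).mp hxC') hxB]
    · rintro ⟨p₁, q₁, p₂, q₂, h1, h2, h3, ⟨B', hB', hp1, hp2⟩, ⟨C', hC', hq1, hq2⟩, hno⟩
      obtain ⟨B, hB, rfl⟩ := Finset.mem_image.mp hB'
      obtain ⟨C, hC, rfl⟩ := Finset.mem_image.mp hC'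
      have hBC : B = C := hnc B hB C hC p₁ q₁ p₂ q₂ ((hmem_e B p₁).mp hp1)
        ((hmem_e B p₂).mp hp2) ((hmem_e C q₁).mp hq1) ((hmem_e C q₂).mp hq2)
        (Fin.lt_def.mp h1) (Fin.lt_def.mp h2) (Fin.lt_def.mp h3)
      subst hBC
      exact hno ⟨e B, hB', hq1, hp2⟩
  · -- maps into St n 0
    intro P hP
    obtain ⟨hne, hun, hnc⟩ := mem_NC.mp hP
    have huniq : ∀ B ∈ P, ∀ C ∈ P, ∀ x : Fin n, x ∈ B → x ∈ C → B = C := by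
      intro B hB C hC x hxB hxC
      obtain ⟨D, _, hD⟩ := hun x
      rw [hD B ⟨hB, hxB⟩, hD C ⟨hC, hxC⟩]
    have hOpens : Opens n (P.image g) = ∅ := by
      rw [Opens, Finset.sdiff_eq_empty_iff_subset]
      intro x hx
      have hxn : x < n := Finset.mem_range.mp hx
      obtain ⟨B, ⟨hB, hxB⟩, _⟩ := hun ⟨x, hxn⟩
      exact Finset.mem_sup.mpr ⟨g B, Finset.mem_image_of_mem g hB,
        (hmem_g B x).mpr ⟨⟨x, hxn⟩, hxB, rfl⟩⟩
    rw [mem_St]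
    refine ⟨?_, ?_, ?_, ?_, ?_, ?_⟩
    · intro B' hB'
      obtain ⟨B, _, rfl⟩ := Finset.mem_image.mp hB'
      exact hgsub B
    · intro B' hB'
      obtain ⟨B, hB, rfl⟩ := Finset.mem_image.mp hB'
      obtain ⟨x, hx⟩ := hne B hB
      exact ⟨(x : ℕ), (hmem_g B x).mpr ⟨x, hx, rfl⟩⟩
    · intro B' hB' C' hC' hne'
      obtain ⟨B, hB, rfl⟩ := Finset.mem_image.mp hB'
      obtain ⟨C, hC, rfl⟩ := Finset.mem_image.mp hC'
      rw [Finset.disjoint_left]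
      intro x hxB hxC
      obtain ⟨i, hiB, rfl⟩ := (hmem_g B x).mp hxB
      obtain ⟨i', hiC, hv⟩ := (hmem_g C _).mp hxC
      rw [show i' = i from Fin.val_injective hv] at hiC
      exact hne' (by rw [huniq B hB C hC i hiB hiC])
    · rw [hOpens]; rfl
    · intro B' hB' C' hC' p₁ q₁ p₂ q₂ hp1 hp2 hq1 hq2 h1 h2 h3
      obtain ⟨B, hB, rfl⟩ := Finset.mem_image.mp hB'
      obtain ⟨C, hC, rfl⟩ := Finset.mem_image.mp hC'
      obtain ⟨i1, hi1, rfl⟩ := (hmem_g B p₁).mp hp1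
      obtain ⟨i2, hi2, rfl⟩ := (hmem_g B p₂).mp hp2
      obtain ⟨j1, hj1, rfl⟩ := (hmem_g C q₁).mp hq1
      obtain ⟨j2, hj2, rfl⟩ := (hmem_g C q₂).mp hq2
      suffices hBC : B = C by rw [hBC]
      by_contra hBC
      apply hnc
      refine ⟨i1, j1, i2, j2, Fin.lt_def.mpr h1, Fin.lt_def.mpr h2, Fin.lt_def.mpr h3,
        ⟨B, hB, hi1, hi2⟩, ⟨C, hC, hj1, hj2⟩, ?_⟩
      rintro ⟨D, hD, hj1D, hi2D⟩
      exact hBC ((huniq B hB D hD i2 hi2 hi2D).trans (huniq D hD C hC j1 hj1D hj1))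
    · intro B' hB' p hp
      rw [hOpens] at hp
      simp at hp
  · -- left inverse
    intro P hP
    have hsub := (mem_St.mp hP).1
    rw [Finset.image_image]
    have : ∀ B ∈ P, (g ∘ e) B = id B := by
      intro B hB; exact hge B (hsub B hB)
    rw [Finset.image_congr fun B hB => this B hB, Finset.image_id]
  · -- right inverse
    intro P _
    rw [Finset.image_image]
    have : ∀ B ∈ P, (e ∘ g) B = id B := by
      intro B _; exact heg B
    rw [Finset.image_congr fun B hB => this B hB, Finset.image_id]
  · -- weights
    intro P hP
    have hsub := (mem_St.mp hP).1
    have hinj : ∀ B ∈ P, ∀ C ∈ P, e B = e C → B = C := by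
      intro B hB C hC h
      rw [← hge B (hsub B hB), ← hge C (hsub C hC), h]
    rw [Finset.prod_image hinj]
    exact Finset.prod_congr rfl fun B hB => by rw [hcard_e B (hsub B hB)]

end AopAux

/-- With `τ` the vacuum state `τ(T) = ⟨T δ₀, δ₀⟩`, the moments `τ(aᵏ)` of
`a = l + Σ_{n≥0} α_{n+1}(l*)ⁿ` are the moments of the distribution with `R`-transform
`ℛ(z) = Σ_{n≥0} α_{n+1} zⁿ`; equivalently, the free cumulants of `a` are `kₙ(a) = αₙ`,
i.e. the moment-cumulant formula holds with cumulant sequence `α`. -/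
theorem aOp_free_cumulants (α : ℕ → ℂ) (n : ℕ) (hn : 1 ≤ n) :
    ((aOp α ^ n) (Finsupp.single 0 1)) 0 =
      ∑ P ∈ NCPartitions n, ∏ B ∈ P, α B.card := by
  rw [AopAux.aOp_pow_eq_F, AopAux.F_eq_NC]
end
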